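/- arXiv:2601.01965 — 4 statements merged into one kernel-verified Lean document; each statement's English description precedes it below -/
import Mathlib

section
/- Let $(a_\ell)_{\ell\in\mathbb{N}_0}$ be a sequence of nonnegative real numbers and suppose there exists a constant $C_{\mathrm{tail}} > 0$ such that $\sum_{k=\ell}^{\ell+n} a_k^2 \le C_{\mathrm{tail}}\, a_\ell^2$ for all $\ell, n \in \mathbb{N}_0$. Then there exist constants $C_{\mathrm{lin}} = (1+C_{\mathrm{tail}})^{1/2}$ and $q_{\mathrm{lin}} = ((1+C_{\mathrm{tail}})/(2+C_{\mathrm{tail}}))^{1/2} < 1$ such that $a_{\ell+n} \le C_{\mathrm{lin}}\, q_{\mathrm{lin}}^n\, a_\ell$ for all $\ell, n \in \mathbb{N}_0$. -/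
/-- Summability criterion for R-linear convergence. -/
theorem tail_summability_implies_Rlinear
    (a : ℕ → ℝ) (ha : ∀ ℓ, 0 ≤ a ℓ) (Ctail : ℝ) (hC : 0 < Ctail)
    (hsum : ∀ ℓ n : ℕ, ∑ k ∈ Finset.Icc ℓ (ℓ + n), (a k) ^ 2 ≤ Ctail * (a ℓ) ^ 2) :
    Real.sqrt ((1 + Ctail) / (2 + Ctail)) < 1 ∧
    ∀ ℓ n : ℕ,
      a (ℓ + n) ≤ Real.sqrt (1 + Ctail) * (Real.sqrt ((1 + Ctail) / (2 + Ctail))) ^ n * a ℓ := by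
  set q2 : ℝ := (1 + Ctail) / (2 + Ctail) with hq2
  have h2C : (0:ℝ) < 2 + Ctail := by linarith
  have hq2nonneg : 0 ≤ q2 := by positivity
  have hq2lt : q2 < 1 := by
    rw [hq2, div_lt_one h2C]; linarith
  have hqlt : Real.sqrt q2 < 1 := by
    nlinarith [Real.sq_sqrt hq2nonneg, Real.sqrt_nonneg q2]
  refine ⟨hqlt, ?_⟩
  -- key: for j ≤ n, ∑_{k=ℓ+j}^{ℓ+n} a k ^2 ≤ q2^j * (Ctail * a ℓ ^ 2)
  have key : ∀ j ℓ n : ℕ, j ≤ n →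
      ∑ k ∈ Finset.Icc (ℓ + j) (ℓ + n), (a k) ^ 2 ≤ q2 ^ j * (Ctail * (a ℓ) ^ 2) := by
    intro j
    induction j with
    | zero => intro ℓ n _; simpa using hsum ℓ n
    | succ j ih =>
      intro ℓ n hjn
      have hj : j ≤ n := Nat.le_of_succ_le hjn
      have hle : ℓ + j ≤ ℓ + n := by omega
      have hsplit : ∑ k ∈ Finset.Icc (ℓ + j) (ℓ + n), (a k) ^ 2
          = (a (ℓ + j)) ^ 2 + ∑ k ∈ Finset.Icc (ℓ + (j + 1)) (ℓ + n), (a k) ^ 2 := by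
        rw [Finset.Icc_eq_cons_Ioc hle, Finset.sum_cons]
        congr 1
        rw [show ℓ + (j + 1) = (ℓ + j) + 1 by omega, Finset.Icc_add_one_left_eq_Ioc]
      -- σ_j ≤ (2 + Ctail) * a (ℓ+j) ^ 2
      have hσ : ∑ k ∈ Finset.Icc (ℓ + j) (ℓ + n), (a k) ^ 2
          ≤ (2 + Ctail) * (a (ℓ + j)) ^ 2 := by
        have := hsum (ℓ + j) (n - j)
        rw [show ℓ + j + (n - j) = ℓ + n by omega] at this
        nlinarith [sq_nonneg (a (ℓ + j))]
      have hstep : ∑ k ∈ Finset.Icc (ℓ + (j + 1)) (ℓ + n), (a k) ^ 2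
          ≤ q2 * ∑ k ∈ Finset.Icc (ℓ + j) (ℓ + n), (a k) ^ 2 := by
        have h1 : ∑ k ∈ Finset.Icc (ℓ + (j + 1)) (ℓ + n), (a k) ^ 2
            = (∑ k ∈ Finset.Icc (ℓ + j) (ℓ + n), (a k) ^ 2) - (a (ℓ + j)) ^ 2 := by
          linarith [hsplit]
        rw [h1, hq2, div_mul_eq_mul_div, le_div_iff₀ h2C]
        nlinarith [hσ]
      calc ∑ k ∈ Finset.Icc (ℓ + (j + 1)) (ℓ + n), (a k) ^ 2
          ≤ q2 * ∑ k ∈ Finset.Icc (ℓ + j) (ℓ + n), (a k) ^ 2 := hstep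
        _ ≤ q2 * (q2 ^ j * (Ctail * (a ℓ) ^ 2)) := by
            exact mul_le_mul_of_nonneg_left (ih ℓ n hj) hq2nonneg
        _ = q2 ^ (j + 1) * (Ctail * (a ℓ) ^ 2) := by ring
  intro ℓ n
  have hpow : Real.sqrt (q2 ^ n) = Real.sqrt q2 ^ n := by
    induction n with
    | zero => simp
    | succ m ihm => rw [pow_succ, pow_succ, Real.sqrt_mul (by positivity), ihm]
  have hsq : (a (ℓ + n)) ^ 2 ≤ q2 ^ n * (Ctail * (a ℓ) ^ 2) := by
    have := key n ℓ n le_rfl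
    simpa using this
  have h1 : a (ℓ + n) = Real.sqrt ((a (ℓ + n)) ^ 2) := by
    rw [Real.sqrt_sq (ha _)]
  rw [h1]
  have h2 : Real.sqrt ((a (ℓ + n)) ^ 2) ≤ Real.sqrt (q2 ^ n * (Ctail * (a ℓ) ^ 2)) :=
    Real.sqrt_le_sqrt hsq
  refine h2.trans ?_
  rw [Real.sqrt_mul (by positivity), Real.sqrt_mul hC.le, Real.sqrt_sq (ha _), hpow]
  have h3 : Real.sqrt Ctail ≤ Real.sqrt (1 + Ctail) :=
    Real.sqrt_le_sqrt (by linarith)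
  have h4 : (0:ℝ) ≤ Real.sqrt q2 ^ n := by positivity
  nlinarith [Real.sqrt_nonneg Ctail, ha ℓ, mul_le_mul_of_nonneg_right h3 (mul_nonneg h4 (ha ℓ))]
end

section
/- Let $(a_\ell)_{\ell\in\mathbb{N}_0}$ and $(R_\ell)_{\ell\in\mathbb{N}_0}$ be sequences of nonnegative reals, let $m \in \mathbb{N}$, $0 < q < 1$, $C_{\mathrm{mon}} \ge 1$, and $C_{\mathrm{sum}} > 0$. Assume: (i) $a_{\ell+m}^2 \le q\, a_\ell^2 + R_\ell^2$ for all $\ell$; (ii) $a_{\ell+k} \le C_{\mathrm{mon}}\, a_\ell$ for all $\ell$ and $0 \le k < m$ (quasi-monotonicity over gaps shorter than $m$); (iii) $\sum_{k=\ell}^{\infty} R_k^2 \le C_{\mathrm{sum}}\, a_\ell^2$ for all $\ell$. Then there exists a constant $C_{\mathrm{tail}} > 0$, depending only on $q$, $m$, $C_{\mathrm{mon}}$, and $C_{\mathrm{sum}}$, such that $\sum_{k=\ell}^{\ell+n} a_k^2 \le C_{\mathrm{tail}}\, a_\ell^2$ for all $\ell, n \in \mathbb{N}_0$; in particular, the sequence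 $(a_\ell)$ is R-linearly convergent to zero. -/
/-- Perturbed m-step contraction with summable perturbations and short-range
quasi-monotonicity yields uniform tail summability, hence R-linear convergence. -/
theorem perturbed_contraction_implies_tail_summability
    (a R : ℕ → ℝ) (ha : ∀ ℓ, 0 ≤ a ℓ) (hR : ∀ ℓ, 0 ≤ R ℓ)
    (m : ℕ) (hm : 0 < m) (q : ℝ) (hq0 : 0 < q) (hq1 : q < 1)
    (Cmon : ℝ) (hCmon : 1 ≤ Cmon) (Csum : ℝ) (hCsum : 0 < Csum)
    (hcontr : ∀ ℓ : ℕ, (a (ℓ + m)) ^ 2 ≤ q * (a ℓ) ^ 2 + (R ℓ) ^ 2)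
    (hmon : ∀ ℓ k : ℕ, k < m → a (ℓ + k) ≤ Cmon * a ℓ)
    (hRsum : ∀ ℓ n : ℕ, ∑ k ∈ Finset.Icc ℓ (ℓ + n), (R k) ^ 2 ≤ Csum * (a ℓ) ^ 2) :
    ∃ Ctail : ℝ, 0 < Ctail ∧
      (∀ ℓ n : ℕ, ∑ k ∈ Finset.Icc ℓ (ℓ + n), (a k) ^ 2 ≤ Ctail * (a ℓ) ^ 2) ∧
      ∃ Clin qlin : ℝ, 0 < Clin ∧ 0 < qlin ∧ qlin < 1 ∧
        ∀ ℓ n : ℕ, a (ℓ + n) ≤ Clin * qlin ^ n * a ℓ := by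
  have hq1' : 0 < 1 - q := by linarith
  set D : ℝ := (1 + Csum) / (1 - q) with hDdef
  have hD0 : 0 < D := div_pos (by linarith) hq1'
  -- Step 1: geometric sums along m-steps
  have step1 : ∀ ℓ J : ℕ, ∑ j ∈ Finset.range (J + 1), (a (ℓ + j * m)) ^ 2 ≤ D * (a ℓ) ^ 2 := by
    intro ℓ J
    have hRb : ∑ j ∈ Finset.range (J + 1), (R (ℓ + j * m)) ^ 2 ≤ Csum * (a ℓ) ^ 2 := by
      have hinj : ∀ x ∈ Finset.range (J + 1), ∀ y ∈ Finset.range (J + 1),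
          ℓ + x * m = ℓ + y * m → x = y := by
        intro x _ y _ h
        have : x * m = y * m := by omega
        exact Nat.eq_of_mul_eq_mul_right hm this
      have him : (Finset.range (J + 1)).image (fun j => ℓ + j * m) ⊆
          Finset.Icc ℓ (ℓ + J * m) := by
        intro x hx
        simp only [Finset.mem_image, Finset.mem_range] at hx
        obtain ⟨j, hj, rfl⟩ := hx
        simp only [Finset.mem_Icc]
        constructor
        · omega
        · have : j * m ≤ J * m := Nat.mul_le_mul_right m (by omega)
          omega
      calc ∑ j ∈ Finset.range (J + 1), (R (ℓ + j * m)) ^ 2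
          = ∑ x ∈ (Finset.range (J + 1)).image (fun j => ℓ + j * m), (R x) ^ 2 :=
            (Finset.sum_image (f := fun x => (R x) ^ 2) hinj).symm
        _ ≤ ∑ x ∈ Finset.Icc ℓ (ℓ + J * m), (R x) ^ 2 :=
            Finset.sum_le_sum_of_subset_of_nonneg him (fun i _ _ => sq_nonneg _)
        _ ≤ Csum * (a ℓ) ^ 2 := hRsum ℓ (J * m)
    set S : ℕ → ℝ := fun J => ∑ j ∈ Finset.range (J + 1), (a (ℓ + j * m)) ^ 2 with hSdef
    have hmono : S J ≤ S (J + 1) := by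
      apply Finset.sum_le_sum_of_subset_of_nonneg
      · exact Finset.range_subset_range.2 (by omega)
      · exact fun i _ _ => sq_nonneg _
    have hstep : S (J + 1) ≤ (a ℓ) ^ 2 + q * S J + Csum * (a ℓ) ^ 2 := by
      have h1 : S (J + 1)
          = ∑ j ∈ Finset.range (J + 1), (a (ℓ + (j + 1) * m)) ^ 2 + (a ℓ) ^ 2 := by
        simp only [hSdef]
        rw [Finset.sum_range_succ' (fun j => (a (ℓ + j * m)) ^ 2) (J + 1)]
        norm_num
      have h2 : ∑ j ∈ Finset.range (J + 1), (a (ℓ + (j + 1) * m)) ^ 2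
          ≤ q * S J + Csum * (a ℓ) ^ 2 := by
        have h3 : ∑ j ∈ Finset.range (J + 1), (a (ℓ + (j + 1) * m)) ^ 2
            ≤ ∑ j ∈ Finset.range (J + 1), (q * (a (ℓ + j * m)) ^ 2 + (R (ℓ + j * m)) ^ 2) := by
          apply Finset.sum_le_sum
          intro j _
          have := hcontr (ℓ + j * m)
          have heq : ℓ + (j + 1) * m = ℓ + j * m + m := by ring
          rw [heq]
          exact this
        rw [Finset.sum_add_distrib, ← Finset.mul_sum] at h3
        calc ∑ j ∈ Finset.range (J + 1), (a (ℓ + (j + 1) * m)) ^ 2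
            ≤ q * S J + ∑ j ∈ Finset.range (J + 1), (R (ℓ + j * m)) ^ 2 := h3
          _ ≤ q * S J + Csum * (a ℓ) ^ 2 := by linarith
      linarith
    have : (1 - q) * S J ≤ (1 + Csum) * (a ℓ) ^ 2 := by nlinarith
    rw [hDdef, div_mul_eq_mul_div, le_div_iff₀ hq1']
    nlinarith
  -- Step 2: uniform tail summability
  set D2 : ℝ := Cmon ^ 2 * m * D with hD2def
  have hD20 : 0 < D2 := by
    apply mul_pos (mul_pos (by positivity) _) hD0
    exact_mod_cast hm
  have hdivl : ∀ j r : ℕ, r < m → (j * m + r) / m = j := by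
    intro j r hr
    rw [mul_comm, Nat.mul_add_div hm, Nat.div_eq_of_lt hr, add_zero]
  have hdml : ∀ i : ℕ, i / m * m + i % m = i := by
    intro i
    have h1 := Nat.div_add_mod i m
    have h2 : i / m * m = m * (i / m) := mul_comm _ _
    omega
  have step2 : ∀ ℓ n : ℕ, ∑ k ∈ Finset.Icc ℓ (ℓ + n), (a k) ^ 2 ≤ D2 * (a ℓ) ^ 2 := by
    intro ℓ n
    have hIcc : ∑ k ∈ Finset.Icc ℓ (ℓ + n), (a k) ^ 2
        = ∑ i ∈ Finset.range (n + 1), (a (ℓ + i)) ^ 2 := by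
      rw [← Finset.Ico_add_one_right_eq_Icc, Finset.sum_Ico_eq_sum_range]
      have h : ℓ + n + 1 - ℓ = n + 1 := by omega
      rw [h]
    rw [hIcc]
    -- pointwise: a (ℓ+i) ≤ Cmon * a (ℓ + (i/m)*m)
    have hpt : ∀ i : ℕ, (a (ℓ + i)) ^ 2 ≤ Cmon ^ 2 * (a (ℓ + (i / m) * m)) ^ 2 := by
      intro i
      have hdm : ℓ + i = (ℓ + (i / m) * m) + i % m := by
        have := hdml i
        omega
      have hlt : i % m < m := Nat.mod_lt _ hm
      have h1 : a (ℓ + i) ≤ Cmon * a (ℓ + (i / m) * m) := by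
        rw [hdm]; exact hmon _ _ hlt
      have h2 : (0:ℝ) ≤ a (ℓ + i) := ha _
      nlinarith [ha (ℓ + (i / m) * m)]
    have hsum1 : ∑ i ∈ Finset.range (n + 1), (a (ℓ + i)) ^ 2
        ≤ Cmon ^ 2 * ∑ i ∈ Finset.range (n + 1), (a (ℓ + (i / m) * m)) ^ 2 := by
      rw [Finset.mul_sum]
      exact Finset.sum_le_sum fun i _ => hpt i
    -- reindex: each value j = i/m occurs at most m times
    have hsum2 : ∑ i ∈ Finset.range (n + 1), (a (ℓ + (i / m) * m)) ^ 2
        ≤ ∑ p ∈ Finset.range (n + 1) ×ˢ Finset.range m,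
            (a (ℓ + ((p.1 * m + p.2) / m) * m)) ^ 2 := by
      have hinj : ∀ p ∈ Finset.range (n + 1) ×ˢ Finset.range m,
          ∀ p' ∈ Finset.range (n + 1) ×ˢ Finset.range m,
          p.1 * m + p.2 = p'.1 * m + p'.2 → p = p' := by
        rintro ⟨x, r⟩ hp ⟨y, s⟩ hp' h
        simp only [Finset.mem_product, Finset.mem_range] at hp hp'
        dsimp only at h
        have hx : x = y := by
          rw [← hdivl x r hp.2, h, hdivl y s hp'.2]
        subst hx
        have hm2 : r = s := by omega
        subst hm2; rfl
      have hsub : Finset.range (n + 1) ⊆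
          (Finset.range (n + 1) ×ˢ Finset.range m).image (fun p => p.1 * m + p.2) := by
        intro i hi
        simp only [Finset.mem_range] at hi
        simp only [Finset.mem_image, Finset.mem_product, Finset.mem_range]
        refine ⟨(i / m, i % m), ⟨?_, Nat.mod_lt _ hm⟩, ?_⟩
        · have h1 : i / m ≤ i := Nat.div_le_self i m
          omega
        · exact hdml i
      calc ∑ i ∈ Finset.range (n + 1), (a (ℓ + (i / m) * m)) ^ 2
          ≤ ∑ i ∈ (Finset.range (n + 1) ×ˢ Finset.range m).image (fun p => p.1 * m + p.2),
              (a (ℓ + (i / m) * m)) ^ 2 :=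
            Finset.sum_le_sum_of_subset_of_nonneg hsub (fun i _ _ => sq_nonneg _)
        _ = ∑ p ∈ Finset.range (n + 1) ×ˢ Finset.range m,
              (a (ℓ + ((p.1 * m + p.2) / m) * m)) ^ 2 :=
            Finset.sum_image (f := fun i => (a (ℓ + (i / m) * m)) ^ 2) hinj
    have hsum3 : ∑ p ∈ Finset.range (n + 1) ×ˢ Finset.range m,
        (a (ℓ + ((p.1 * m + p.2) / m) * m)) ^ 2
        = (m : ℝ) * ∑ j ∈ Finset.range (n + 1), (a (ℓ + j * m)) ^ 2 := by
      rw [Finset.sum_product]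
      have : ∀ j ∈ Finset.range (n + 1),
          ∑ r ∈ Finset.range m, (a (ℓ + ((j * m + r) / m) * m)) ^ 2
          = (m : ℝ) * (a (ℓ + j * m)) ^ 2 := by
        intro j _
        have hdiv : ∀ r ∈ Finset.range m, (a (ℓ + ((j * m + r) / m) * m)) ^ 2
            = (a (ℓ + j * m)) ^ 2 := by
          intro r hr
          simp only [Finset.mem_range] at hr
          rw [hdivl j r hr]
        rw [Finset.sum_congr rfl hdiv, Finset.sum_const, Finset.card_range, nsmul_eq_mul]
      rw [Finset.sum_congr rfl this, ← Finset.mul_sum]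
    have := step1 ℓ n
    calc ∑ i ∈ Finset.range (n + 1), (a (ℓ + i)) ^ 2
        ≤ Cmon ^ 2 * ∑ i ∈ Finset.range (n + 1), (a (ℓ + (i / m) * m)) ^ 2 := hsum1
      _ ≤ Cmon ^ 2 * ((m : ℝ) * ∑ j ∈ Finset.range (n + 1), (a (ℓ + j * m)) ^ 2) := by
          rw [← hsum3]
          exact mul_le_mul_of_nonneg_left hsum2 (by positivity)
      _ ≤ Cmon ^ 2 * ((m : ℝ) * (D * (a ℓ) ^ 2)) := by
          apply mul_le_mul_of_nonneg_left _ (by positivity)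
          exact mul_le_mul_of_nonneg_left (step1 ℓ n) (by positivity)
      _ = D2 * (a ℓ) ^ 2 := by rw [hD2def]; ring
  -- conclude
  set Ctail : ℝ := D2 + 1 with hCtdef
  have hCt1 : 1 < Ctail := by simp only [hCtdef]; linarith
  have hCt0 : 0 < Ctail := by linarith
  have step2' : ∀ ℓ n : ℕ, ∑ k ∈ Finset.Icc ℓ (ℓ + n), (a k) ^ 2 ≤ Ctail * (a ℓ) ^ 2 := by
    intro ℓ n
    have := step2 ℓ n
    nlinarith [sq_nonneg (a ℓ)]
  refine ⟨Ctail, hCt0, step2', ?_⟩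
  -- summability of tails
  have hrange : ∀ ℓ n : ℕ, ∑ i ∈ Finset.range n, (a (ℓ + i)) ^ 2 ≤ Ctail * (a ℓ) ^ 2 := by
    intro ℓ n
    cases n with
    | zero => simp; positivity
    | succ k =>
      have h := step2' ℓ k
      have hIcc : ∑ j ∈ Finset.Icc ℓ (ℓ + k), (a j) ^ 2
          = ∑ i ∈ Finset.range (k + 1), (a (ℓ + i)) ^ 2 := by
        rw [← Finset.Ico_add_one_right_eq_Icc, Finset.sum_Ico_eq_sum_range]
        have h2 : ℓ + k + 1 - ℓ = k + 1 := by omega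
        rw [h2]
      rw [← hIcc]
      exact h
  have hsummable : ∀ ℓ : ℕ, Summable (fun k => (a (ℓ + k)) ^ 2) := by
    intro ℓ
    exact summable_of_sum_range_le (fun n => sq_nonneg _) (hrange ℓ)
  set T : ℕ → ℝ := fun ℓ => ∑' k, (a (ℓ + k)) ^ 2 with hTdef
  have hTle : ∀ ℓ, T ℓ ≤ Ctail * (a ℓ) ^ 2 := fun ℓ =>
    Summable.tsum_le_of_sum_range_le (hsummable ℓ) (hrange ℓ)
  have hTge : ∀ ℓ, (a ℓ) ^ 2 ≤ T ℓ := by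
    intro ℓ
    have h := Summable.le_tsum (hsummable ℓ) 0 (fun j _ => sq_nonneg _)
    simpa using h
  have hTnn : ∀ ℓ, 0 ≤ T ℓ := fun ℓ => le_trans (sq_nonneg _) (hTge ℓ)
  have hTsplit : ∀ ℓ, T ℓ = (a ℓ) ^ 2 + T (ℓ + 1) := by
    intro ℓ
    have h := Summable.tsum_eq_zero_add (hsummable ℓ)
    simp only [add_zero] at h
    rw [hTdef]
    simp only
    rw [h]
    congr 1
    apply tsum_congr
    intro k
    congr 2
    omega
  set θ : ℝ := 1 - 1 / Ctail with hθdef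
  have hθ0 : 0 < θ := by
    have : 1 / Ctail < 1 := by
      rw [div_lt_one hCt0]; exact hCt1
    simp only [hθdef]; linarith
  have hθ1 : θ < 1 := by
    have : 0 < 1 / Ctail := by positivity
    simp only [hθdef]; linarith
  have hTstep : ∀ ℓ, T (ℓ + 1) ≤ θ * T ℓ := by
    intro ℓ
    have h1 := hTle ℓ
    have h2 := hTsplit ℓ
    have h3 : T ℓ / Ctail ≤ (a ℓ) ^ 2 := by
      rw [div_le_iff₀ hCt0]
      nlinarith
    have : T (ℓ + 1) = T ℓ - (a ℓ) ^ 2 := by linarith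
    rw [this, hθdef]
    have h4 : T ℓ * (1 / Ctail) ≤ (a ℓ) ^ 2 := by
      rw [mul_one_div]; exact h3
    nlinarith [hTnn ℓ]
  have hTiter : ∀ ℓ n : ℕ, T (ℓ + n) ≤ θ ^ n * T ℓ := by
    intro ℓ n
    induction n with
    | zero => simp
    | succ k ih =>
      have h1 := hTstep (ℓ + k)
      have h2 : θ * T (ℓ + k) ≤ θ * (θ ^ k * T ℓ) :=
        mul_le_mul_of_nonneg_left ih (le_of_lt hθ0)
      calc T (ℓ + (k + 1)) = T (ℓ + k + 1) := by ring_nf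
        _ ≤ θ * T (ℓ + k) := h1
        _ ≤ θ * (θ ^ k * T ℓ) := h2
        _ = θ ^ (k + 1) * T ℓ := by ring
  refine ⟨Real.sqrt Ctail, Real.sqrt θ, Real.sqrt_pos.2 hCt0, Real.sqrt_pos.2 hθ0, ?_, ?_⟩
  · have := Real.sqrt_lt_sqrt (le_of_lt hθ0) hθ1
    simpa using this
  · intro ℓ n
    have h1 : (a (ℓ + n)) ^ 2 ≤ θ ^ n * (Ctail * (a ℓ) ^ 2) := by
      calc (a (ℓ + n)) ^ 2 ≤ T (ℓ + n) := hTge _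
        _ ≤ θ ^ n * T ℓ := hTiter ℓ n
        _ ≤ θ ^ n * (Ctail * (a ℓ) ^ 2) :=
          mul_le_mul_of_nonneg_left (hTle ℓ) (pow_nonneg (le_of_lt hθ0) n)
    have hRnn : 0 ≤ Real.sqrt Ctail * Real.sqrt θ ^ n * a ℓ := by
      have := ha ℓ
      positivity
    have hsq : (Real.sqrt Ctail * Real.sqrt θ ^ n * a ℓ) ^ 2 = Ctail * θ ^ n * (a ℓ) ^ 2 := by
      rw [mul_pow, mul_pow, ← pow_mul, Real.sq_sqrt (le_of_lt hCt0)]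
      rw [mul_comm n 2, pow_mul, Real.sq_sqrt (le_of_lt hθ0)]
    have h2 : (a (ℓ + n)) ^ 2 ≤ (Real.sqrt Ctail * Real.sqrt θ ^ n * a ℓ) ^ 2 := by
      rw [hsq]; nlinarith
    exact (pow_le_pow_iff_left₀ (ha _) hRnn (by norm_num)).1 h2
end

section
/- Let $T$ be a finite set, $\mu : T \to \mathbb{R}_{\ge 0}$, and for $U \subseteq T$ write $\mu(U)^2 := \sum_{t \in U} \mu(t)^2$. Let $h : T \to T'$ be a map to a refined index set and suppose the refined contributions satisfy $\nu(T' \setminus T)^2 \le q_{\mathrm{red}}^2\, \mu(T \setminus T')^2$ and $\nu(T' \cap T)^2 \le \mu(T' \cap T)^2$ (identity on unrefined elements), where $0 < q_{\mathrm{red}} < 1$. If the Dörfler criterion $\theta\,\mu(T)^2 \le \mu(T \setminus T')^2$ holds for some $0 < \theta \le 1$, then $\nu(T')^2 \le (1 - (1-q_{\mathrm{red}}^2)\theta)\, \mu(T)^2$. -/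
/-- Abstract set-theoretic estimator reduction under the Dörfler marking criterion. -/
theorem estimator_reduction_sets
    {ι : Type*} [DecidableEq ι] (T T' : Finset ι) (μ ν : ι → ℝ)
    (hμ : ∀ t, 0 ≤ μ t) (hν : ∀ t, 0 ≤ ν t)
    (qred θ : ℝ) (hq0 : 0 < qred) (hq1 : qred < 1) (hθ0 : 0 < θ) (hθ1 : θ ≤ 1)
    (hred : ∑ t ∈ T' \ T, (ν t) ^ 2 ≤ qred ^ 2 * ∑ t ∈ T \ T', (μ t) ^ 2)
    (hid : ∑ t ∈ T' ∩ T, (ν t) ^ 2 ≤ ∑ t ∈ T' ∩ T, (μ t) ^ 2)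
    (hdoerfler : θ * ∑ t ∈ T, (μ t) ^ 2 ≤ ∑ t ∈ T \ T', (μ t) ^ 2) :
    ∑ t ∈ T', (ν t) ^ 2 ≤ (1 - (1 - qred ^ 2) * θ) * ∑ t ∈ T, (μ t) ^ 2 := by
  have hsplit' : ∑ t ∈ T' ∩ T, (ν t) ^ 2 + ∑ t ∈ T' \ T, (ν t) ^ 2
      = ∑ t ∈ T', (ν t) ^ 2 := Finset.sum_inter_add_sum_sdiff T' T _
  have hsplit : ∑ t ∈ T ∩ T', (μ t) ^ 2 + ∑ t ∈ T \ T', (μ t) ^ 2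
      = ∑ t ∈ T, (μ t) ^ 2 := Finset.sum_inter_add_sum_sdiff T T' _
  have hcomm : ∑ t ∈ T' ∩ T, (μ t) ^ 2 = ∑ t ∈ T ∩ T', (μ t) ^ 2 := by
    rw [Finset.inter_comm]
  have h1 : ∑ t ∈ T', (ν t) ^ 2
      ≤ ∑ t ∈ T, (μ t) ^ 2 - (1 - qred ^ 2) * ∑ t ∈ T \ T', (μ t) ^ 2 := by
    nlinarith [hred, hid]
  have h2 : (1 - qred ^ 2) * (θ * ∑ t ∈ T, (μ t) ^ 2)
      ≤ (1 - qred ^ 2) * ∑ t ∈ T \ T', (μ t) ^ 2 := by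
    apply mul_le_mul_of_nonneg_left hdoerfler
    nlinarith
  nlinarith [h1, h2]
end

section
/- Let $(a_\ell)$, $(M_\ell)$ be sequences of nonnegative reals and $(T_\ell)$ a nondecreasing sequence of natural numbers with $T_0 \ge 1$. Suppose there exist constants $C_{\mathrm{mesh}}, C_1, B, s > 0$ and $C_{\mathrm{lin}} \ge 1$, $0 < q_{\mathrm{lin}} < 1$ such that: (i) $T_\ell - T_0 \le C_{\mathrm{mesh}} \sum_{k=0}^{\ell-1} M_k$ for all $\ell \ge 1$; (ii) $M_\ell \le C_1 B\, a_\ell^{-1/s}$ for all $\ell$ with $a_\ell > 0$; (iii) $a_\ell \le C_{\mathrm{lin}} q_{\mathrm{lin}}^{\ell-k} a_k$ for all $k \le \ell$. Then there exists $C_{\mathrm{opt}} > 0$ depending only on $C_{\mathrm{mesh}}, C_1, C_{\mathrm{lin}}, q_{\mathrm{lin}}, s$ such that $\sup_{\ell \ge 1, a_\ell > 0} (T_\ell - T_0 + 1)^{s}\, a_\ell \le C_{\mathrm{opt}}\, B^{s}$. -/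
/-- Geometric sum bound. -/
lemma my_geom_sum_le {Q : ℝ} (h0 : 0 ≤ Q) (h1 : Q < 1) (n : ℕ) :
    ∑ j ∈ Finset.range n, Q ^ j ≤ 1 / (1 - Q) := by
  rw [geom_sum_eq (by linarith : Q ≠ 1)]
  have h2 : (Q ^ n - 1) / (Q - 1) = (1 - Q ^ n) / (1 - Q) := by
    rw [← neg_div_neg_eq]; ring_nf
  rw [h2, div_le_div_iff₀ (by linarith) (by linarith)]
  have hQn : 0 ≤ Q ^ n := pow_nonneg h0 n
  nlinarith

/-- Abstract optimal-rates argument: mesh-closure, cardinality bound and R-linear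
convergence yield optimal algebraic decay. -/
theorem abstract_optimal_rates
    (a M : ℕ → ℝ) (ha : ∀ ℓ, 0 ≤ a ℓ) (hM : ∀ ℓ, 0 ≤ M ℓ)
    (T : ℕ → ℕ) (hTmono : Monotone T) (hT0 : 1 ≤ T 0)
    (Cmesh C1 B s : ℝ) (hCmesh : 0 < Cmesh) (hC1 : 0 < C1) (hB : 0 < B) (hs : 0 < s)
    (Clin qlin : ℝ) (hClin : 1 ≤ Clin) (hq0 : 0 < qlin) (hq1 : qlin < 1)
    (hclosure : ∀ ℓ : ℕ, 1 ≤ ℓ →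
      (T ℓ : ℝ) - T 0 ≤ Cmesh * ∑ k ∈ Finset.range ℓ, M k)
    (hmark : ∀ ℓ : ℕ, 0 < a ℓ → M ℓ ≤ C1 * B * (a ℓ) ^ (-(1 / s)))
    (hlin : ∀ k ℓ : ℕ, k ≤ ℓ → a ℓ ≤ Clin * qlin ^ (ℓ - k) * a k) :
    ∃ Copt : ℝ, 0 < Copt ∧
      ∀ ℓ : ℕ, 1 ≤ ℓ → 0 < a ℓ →
        ((T ℓ : ℝ) - T 0 + 1) ^ s * a ℓ ≤ Copt * B ^ s := by
  have hs' : (0:ℝ) < 1 / s := by positivity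
  have hClin0 : (0:ℝ) < Clin := lt_of_lt_of_le one_pos hClin
  set Q : ℝ := qlin ^ (1 / s) with hQdef
  have hQ0 : 0 < Q := Real.rpow_pos_of_pos hq0 _
  have hQ1 : Q < 1 := Real.rpow_lt_one hq0.le hq1 hs'
  have hCl : 0 < Clin ^ (1 / s) := Real.rpow_pos_of_pos hClin0 _
  set K : ℝ := Cmesh * (C1 * Clin ^ (1 / s)) * (1 / (1 - Q)) with hKdef
  have h1Q : (0:ℝ) < 1 - Q := by linarith
  have hK0 : 0 < K := mul_pos (mul_pos hCmesh (mul_pos hC1 hCl)) (one_div_pos.mpr h1Q)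
  set E : ℝ := (Clin * a 1) ^ (1 / s) with hEdef
  have hE0 : 0 ≤ E := Real.rpow_nonneg (mul_nonneg hClin0.le (ha 1)) _
  refine ⟨(K + E / B) ^ s, Real.rpow_pos_of_pos (add_pos_of_pos_of_nonneg hK0 (div_nonneg hE0 hB.le)) s, ?_⟩
  intro ℓ hℓ haℓ
  -- positivity of a k for k ≤ ℓ
  have hak : ∀ k, k ≤ ℓ → 0 < a k := by
    intro k hk
    rcases (ha k).lt_or_eq with h | h
    · exact h
    · exfalso
      have h2 := hlin k ℓ hk
      rw [← h, mul_zero] at h2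
      linarith
  set X : ℝ := a ℓ ^ (-(1 / s)) with hXdef
  have hX0 : 0 < X := Real.rpow_pos_of_pos haℓ _
  -- per-term bound on M k
  have hMk : ∀ k ∈ Finset.range ℓ, M k ≤ C1 * B * Clin ^ (1 / s) * X * Q ^ (ℓ - k) := by
    intro k hk
    have hk' : k ≤ ℓ := (Finset.mem_range.mp hk).le
    have hakpos := hak k hk'
    have hx : 0 < a k ^ (1 / s) := Real.rpow_pos_of_pos hakpos _
    have hy : 0 < a ℓ ^ (1 / s) := Real.rpow_pos_of_pos haℓ _
    have h1 : a ℓ ^ (1 / s) ≤ Clin ^ (1 / s) * Q ^ (ℓ - k) * a k ^ (1 / s) := by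
      have h2 : a ℓ ≤ Clin * qlin ^ (ℓ - k) * a k := hlin k ℓ hk'
      have h3 := Real.rpow_le_rpow haℓ.le h2 hs'.le
      calc a ℓ ^ (1 / s) ≤ (Clin * qlin ^ (ℓ - k) * a k) ^ (1 / s) := h3
        _ = Clin ^ (1 / s) * Q ^ (ℓ - k) * a k ^ (1 / s) := by
            rw [Real.mul_rpow (by positivity) (ha k),
              Real.mul_rpow hClin0.le (by positivity)]
            congr 1
            rw [hQdef, ← Real.rpow_natCast qlin (ℓ - k),
              ← Real.rpow_natCast (qlin ^ (1 / s)) (ℓ - k),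
              ← Real.rpow_mul hq0.le, ← Real.rpow_mul hq0.le, mul_comm,
              mul_comm (1 / s) ((ℓ - k : ℕ) : ℝ)]
            exact mul_comm _ _
    have h4 : a k ^ (-(1 / s)) ≤ Clin ^ (1 / s) * Q ^ (ℓ - k) * X := by
      rw [hXdef, Real.rpow_neg (ha k), Real.rpow_neg (ha ℓ), ← one_div,
        ← div_eq_mul_inv, div_le_div_iff₀ hx hy, one_mul]
      exact h1
    calc M k ≤ C1 * B * a k ^ (-(1 / s)) := hmark k hakpos
      _ ≤ C1 * B * (Clin ^ (1 / s) * Q ^ (ℓ - k) * X) := by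
          apply mul_le_mul_of_nonneg_left h4 (by positivity)
      _ = C1 * B * Clin ^ (1 / s) * X * Q ^ (ℓ - k) := by ring
  -- geometric sum bound
  have hsum : ∑ k ∈ Finset.range ℓ, Q ^ (ℓ - k) ≤ 1 / (1 - Q) := by
    have hrefl := Finset.sum_range_reflect (fun k => Q ^ (ℓ - k)) ℓ
    rw [← hrefl]
    calc ∑ j ∈ Finset.range ℓ, Q ^ (ℓ - (ℓ - 1 - j))
        ≤ ∑ j ∈ Finset.range ℓ, Q ^ j := by
          apply Finset.sum_le_sum
          intro j hj
          have hjℓ : j < ℓ := Finset.mem_range.mp hj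
          have : ℓ - (ℓ - 1 - j) = j + 1 := by omega
          rw [this, pow_succ]
          nlinarith [mul_nonneg (pow_nonneg hQ0.le j) (by linarith : (0:ℝ) ≤ 1 - Q)]
      _ ≤ 1 / (1 - Q) := my_geom_sum_le hQ0.le hQ1 ℓ
  -- mesh bound
  have hT : (T ℓ : ℝ) - T 0 ≤ K * B * X := by
    calc (T ℓ : ℝ) - T 0 ≤ Cmesh * ∑ k ∈ Finset.range ℓ, M k := hclosure ℓ hℓ
      _ ≤ Cmesh * ∑ k ∈ Finset.range ℓ, C1 * B * Clin ^ (1 / s) * X * Q ^ (ℓ - k) := by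
          apply mul_le_mul_of_nonneg_left (Finset.sum_le_sum hMk) hCmesh.le
      _ = Cmesh * (C1 * B * Clin ^ (1 / s) * X) * ∑ k ∈ Finset.range ℓ, Q ^ (ℓ - k) := by
          rw [← Finset.mul_sum]; ring
      _ ≤ Cmesh * (C1 * B * Clin ^ (1 / s) * X) * (1 / (1 - Q)) := by
          apply mul_le_mul_of_nonneg_left hsum (by positivity)
      _ = K * B * X := by rw [hKdef]; ring
  have hTnonneg : (0:ℝ) ≤ (T ℓ : ℝ) - T 0 := by
    have := hTmono (Nat.zero_le ℓ)
    have : (T 0 : ℝ) ≤ T ℓ := Nat.cast_le.mpr this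
    linarith
  -- key identities
  have hXinv : X * a ℓ ^ (1 / s) = 1 := by
    rw [hXdef, ← Real.rpow_add haℓ, neg_add_cancel, Real.rpow_zero]
  have haid : (a ℓ ^ (1 / s)) ^ s = a ℓ := by
    rw [← Real.rpow_mul (ha ℓ), one_div, inv_mul_cancel₀ hs.ne', Real.rpow_one]
  have hals : a ℓ ^ (1 / s) ≤ E := by
    rw [hEdef]
    apply Real.rpow_le_rpow (ha ℓ) _ hs'.le
    calc a ℓ ≤ Clin * qlin ^ (ℓ - 1) * a 1 := hlin 1 ℓ hℓ
      _ ≤ Clin * 1 * a 1 := by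
          apply mul_le_mul_of_nonneg_right _ (ha 1)
          exact mul_le_mul_of_nonneg_left (pow_le_one₀ hq0.le hq1.le) hClin0.le
      _ = Clin * a 1 := by ring
  -- main chain
  calc ((T ℓ : ℝ) - T 0 + 1) ^ s * a ℓ
      ≤ (K * B * X + 1) ^ s * a ℓ := by
        apply mul_le_mul_of_nonneg_right _ (ha ℓ)
        exact Real.rpow_le_rpow (by linarith) (by linarith) hs.le
    _ = ((K * B * X + 1) * a ℓ ^ (1 / s)) ^ s := by
        rw [Real.mul_rpow (by positivity) (Real.rpow_nonneg (ha ℓ) _), haid]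
    _ = (K * B + a ℓ ^ (1 / s)) ^ s := by
        congr 1
        have : (K * B * X + 1) * a ℓ ^ (1 / s)
            = K * B * (X * a ℓ ^ (1 / s)) + a ℓ ^ (1 / s) := by ring
        rw [this, hXinv, mul_one]
    _ ≤ (K * B + E) ^ s := by
        apply Real.rpow_le_rpow (by positivity) (by linarith) hs.le
    _ = (K + E / B) ^ s * B ^ s := by
        rw [← Real.mul_rpow (by positivity) hB.le]
        congr 1
        field_simp
end
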